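/- arXiv:2505.09308 — 2 statements merged into one kernel-verified Lean document; each statement's English description precedes it below -/
import Mathlib

section
/- Let λ₁ ≥ ... ≥ λₙ > 0 and σ₁² ≥ ... ≥ σₙ² satisfy Schur–Horn majorization. Suppose λₙ < c ≤ c̃ < λ₁, let j* = max{ j : λⱼ ≥ c } and k* = max{ j : σⱼ² ≥ c̃ }, and assume j* < k*. Then j*·c + ∑_{i=j*+1}^n λᵢ < k*·c̃ + ∑_{i=k*+1}^n σᵢ². -/
open Matrix Finset

/-! Splitting off the band `jstar ≤ i < kstar`, the left side is `kstar * c`, plus the band's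
excess `∑ (λᵢ - c) < 0`, plus the `λ`-tail from `kstar` on. Majorization with equal totals bounds
that tail by the `σ²`-tail, and `c ≤ c̃` finishes. -/

section OrderedGroup

variable {ι M : Type*} [AddCommGroup M] [PartialOrder M] [IsOrderedAddMonoid M]

theorem Finset.sum_filter_not_le_of_sum_filter_ge {s : Finset ι} {p : ι → Prop} [DecidablePred p]
    {f g : ι → M} (hp : ∑ i ∈ s with p i, g i ≤ ∑ i ∈ s with p i, f i)
    (hs : ∑ i ∈ s, f i = ∑ i ∈ s, g i) :
    ∑ i ∈ s with ¬p i, f i ≤ ∑ i ∈ s with ¬p i, g i := by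
  have hf := sum_filter_add_sum_filter_not s p f
  have hg := sum_filter_add_sum_filter_not s p g
  rw [← eq_sub_iff_add_eq'] at hf hg
  rw [hf, hg, hs]
  exact sub_le_sub_left hp _

end OrderedGroup

namespace Fin

variable {n : ℕ}

theorem card_filter_le_val_lt {j k : ℕ} (hk : k ≤ n) :
    #{i : Fin n | j ≤ i.val ∧ i.val < k} = k - j := by
  rw [← card_map valEmbedding, map_filter', ← Nat.card_Ico]
  congr 1
  ext i
  simp only [mem_filter, mem_map, mem_univ, true_and, valEmbedding_apply, mem_Ico]
  constructor
  · rintro ⟨-, a, ha, rfl⟩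
    exact ha
  · intro hi
    exact ⟨⟨⟨i, by omega⟩, rfl⟩, ⟨i, by omega⟩, hi, rfl⟩

theorem sum_filter_le_val_eq_add {M : Type*} [AddCommMonoid M] (f : Fin n → M) {j k : ℕ}
    (hjk : j ≤ k) :
    ∑ i : Fin n with j ≤ i.val, f i =
      ∑ i : Fin n with j ≤ i.val ∧ i.val < k, f i + ∑ i : Fin n with k ≤ i.val, f i := by
  rw [← sum_filter_add_sum_filter_not _ (fun i : Fin n => i.val < k), filter_filter,
    filter_filter]
  congr 2
  ext i
  simp only [mem_filter, mem_univ, true_and]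
  omega

theorem sum_filter_le_val_le_of_majorization {lam sq : Fin n → ℝ}
    (hmaj : ∀ k : ℕ, k < n → ∑ i : Fin n with i.val < k, sq i ≤ ∑ i : Fin n with i.val < k, lam i)
    (heq : ∑ i, lam i = ∑ i, sq i) (k : ℕ) :
    ∑ i : Fin n with k ≤ i.val, lam i ≤ ∑ i : Fin n with k ≤ i.val, sq i := by
  have hprefix : ∑ i : Fin n with i.val < k, sq i ≤ ∑ i : Fin n with i.val < k, lam i := by
    rcases lt_or_ge k n with hk | hk
    · exact hmaj k hk
    · rw [filter_true_of_mem fun i _ => i.isLt.trans_le hk]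
      exact heq.ge
  simpa only [not_lt] using sum_filter_not_le_of_sum_filter_ge hprefix heq

theorem sum_filter_le_val_lt_lt_of_lt {f : Fin n → ℝ} {c : ℝ} {j k : ℕ}
    (hf : ∀ i : Fin n, j ≤ i.val → f i < c) (hjk : j < k) (hk : k ≤ n) :
    ∑ i : Fin n with j ≤ i.val ∧ i.val < k, f i < ((k : ℝ) - j) * c := by
  have hne : ({i : Fin n | j ≤ i.val ∧ i.val < k} : Finset _).Nonempty :=
    ⟨⟨j, by omega⟩, by simp [hjk]⟩
  calc ∑ i : Fin n with j ≤ i.val ∧ i.val < k, f i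
      < ∑ i : Fin n with j ≤ i.val ∧ i.val < k, c :=
        sum_lt_sum_of_nonempty hne fun i hi => hf i (mem_filter.1 hi).2.1
    _ = ((k : ℝ) - j) * c := by
        rw [Finset.sum_const, card_filter_le_val_lt hk, nsmul_eq_mul, Nat.cast_sub hjk.le]

end Fin

theorem multi_lt_single_case6a_general
    (n : ℕ) (lam sq : Fin n → ℝ)
    (hmaj : ∀ k : ℕ, k < n → ∑ i ∈ Finset.univ.filter (fun i : Fin n => (i : ℕ) < k), sq i ≤ ∑ i ∈ Finset.univ.filter (fun i : Fin n => (i : ℕ) < k), lam i)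
    (heq : ∑ i, lam i = ∑ i, sq i)
    (c ctil : ℝ) (hcc : c ≤ ctil)
    (jstar : ℕ)
    (hj2 : ∀ i : Fin n, jstar ≤ (i : ℕ) → lam i < c)
    (kstar : ℕ) (hk_le : kstar ≤ n)
    (hjk : jstar < kstar) :
    (jstar : ℝ) * c + ∑ i ∈ Finset.univ.filter (fun i : Fin n => jstar ≤ (i : ℕ)), lam i <
      (kstar : ℝ) * ctil + ∑ i ∈ Finset.univ.filter (fun i : Fin n => kstar ≤ (i : ℕ)), sq i := by
  have hband := Fin.sum_filter_le_val_lt_lt_of_lt hj2 hjk hk_le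
  have htail := Fin.sum_filter_le_val_le_of_majorization hmaj heq kstar
  have hc : (kstar : ℝ) * c ≤ kstar * ctil := by gcongr
  rw [Fin.sum_filter_le_val_eq_add lam hjk.le]
  linarith

theorem multi_lt_single_case6a
    (n : ℕ) (hn : 0 < n) (lam sq : Fin n → ℝ)
    (hlam_anti : Antitone lam) (hlam_pos : ∀ i, 0 < lam i) (hsq_anti : Antitone sq)
    (hmaj : ∀ k : ℕ, k < n → ∑ i ∈ Finset.univ.filter (fun i : Fin n => (i : ℕ) < k), sq i ≤ ∑ i ∈ Finset.univ.filter (fun i : Fin n => (i : ℕ) < k), lam i)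
    (heq : ∑ i, lam i = ∑ i, sq i)
    (c ctil : ℝ) (hc1 : lam ⟨n - 1, Nat.sub_lt hn one_pos⟩ < c) (hcc : c ≤ ctil)
    (hc2 : ctil < lam ⟨0, hn⟩)
    (jstar : ℕ) (hj_le : jstar ≤ n)
    (hj1 : ∀ i : Fin n, (i : ℕ) < jstar → c ≤ lam i)
    (hj2 : ∀ i : Fin n, jstar ≤ (i : ℕ) → lam i < c)
    (kstar : ℕ) (hk_le : kstar ≤ n)
    (hk1 : ∀ i : Fin n, (i : ℕ) < kstar → ctil ≤ sq i)
    (hk2 : ∀ i : Fin n, kstar ≤ (i : ℕ) → sq i < ctil)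
    (hjk : jstar < kstar) :
    (jstar : ℝ) * c + ∑ i ∈ Finset.univ.filter (fun i : Fin n => jstar ≤ (i : ℕ)), lam i <
      (kstar : ℝ) * ctil + ∑ i ∈ Finset.univ.filter (fun i : Fin n => kstar ≤ (i : ℕ)), sq i :=
  multi_lt_single_case6a_general n lam sq hmaj heq c ctil hcc jstar hj2 kstar hk_le hjk
end

section
/- Let λ₁ ≥ ... ≥ λₙ > 0 and σ₁² ≥ ... ≥ σₙ² satisfy Schur–Horn majorization. Suppose λₙ < c ≤ c̃ < λ₁, let j* = max{ j : λⱼ ≥ c } and k* = max{ j : σⱼ² ≥ c̃ }, and assume k* ≤ j*. Then j*·c + ∑_{i=j*+1}^n λᵢ ≤ k*·c̃ + ∑_{i=k*+1}^n σᵢ². -/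
open Matrix Finset

theorem multi_le_single_case6b
    (n : ℕ) (hn : 0 < n) (lam sq : Fin n → ℝ)
    (hlam_anti : Antitone lam) (hlam_pos : ∀ i, 0 < lam i) (hsq_anti : Antitone sq)
    (hmaj : ∀ k : ℕ, k < n → ∑ i ∈ Finset.univ.filter (fun i : Fin n => (i : ℕ) < k), sq i ≤ ∑ i ∈ Finset.univ.filter (fun i : Fin n => (i : ℕ) < k), lam i)
    (heq : ∑ i, lam i = ∑ i, sq i)
    (c ctil : ℝ) (hc1 : lam ⟨n - 1, Nat.sub_lt hn one_pos⟩ < c) (hcc : c ≤ ctil)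
    (hc2 : ctil < lam ⟨0, hn⟩)
    (jstar : ℕ) (hj_le : jstar ≤ n)
    (hj1 : ∀ i : Fin n, (i : ℕ) < jstar → c ≤ lam i)
    (hj2 : ∀ i : Fin n, jstar ≤ (i : ℕ) → lam i < c)
    (kstar : ℕ) (hk_le : kstar ≤ n)
    (hk1 : ∀ i : Fin n, (i : ℕ) < kstar → ctil ≤ sq i)
    (hk2 : ∀ i : Fin n, kstar ≤ (i : ℕ) → sq i < ctil)
    (hkj : kstar ≤ jstar) :
    (jstar : ℝ) * c + ∑ i ∈ Finset.univ.filter (fun i : Fin n => jstar ≤ (i : ℕ)), lam i ≤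
      (kstar : ℝ) * ctil + ∑ i ∈ Finset.univ.filter (fun i : Fin n => kstar ≤ (i : ℕ)), sq i := by
  classical
  set P : ℕ → Finset (Fin n) := fun j => Finset.univ.filter (fun i : Fin n => (i : ℕ) < j) with hP
  -- split sums
  have hsplit : ∀ (f : Fin n → ℝ) (j : ℕ),
      ∑ i ∈ P j, f i + ∑ i ∈ Finset.univ.filter (fun i : Fin n => j ≤ (i : ℕ)), f i = ∑ i, f i := by
    intro f j
    have := Finset.sum_filter_add_sum_filter_not Finset.univ (fun i : Fin n => (i : ℕ) < j) f
    simpa [hP, not_lt] using this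
  have h1 := hsplit lam jstar
  have h2 := hsplit sq kstar
  -- majorization at kstar
  have hC : ∑ i ∈ P kstar, sq i ≤ ∑ i ∈ P kstar, lam i := by
    rcases lt_or_eq_of_le hk_le with h | h
    · exact hmaj kstar h
    · have : P kstar = Finset.univ := by
        ext i; simp [hP, h, i.isLt]
      rw [this]
      exact le_of_eq heq.symm
  -- middle block
  set S : Finset (Fin n) := Finset.univ.filter (fun i : Fin n => kstar ≤ (i : ℕ) ∧ (i : ℕ) < jstar) with hS
  have hSdiff : S = P jstar \ P kstar := by
    ext i; simp [hS, hP]; omega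
  have hPsub : P kstar ⊆ P jstar := by
    intro i; simp [hP]; omega
  have hPcard : ∀ j : ℕ, j ≤ n → (P j).card = j := by
    intro j hj
    rw [hP]
    rw [Finset.card_filter, Fin.sum_univ_eq_sum_range (fun i => if i < j then 1 else 0),
      ← Finset.card_filter]
    have : (Finset.range n).filter (fun i => i < j) = Finset.range j := by
      ext x; simp; omega
    simp [this]
  have hScard : S.card = jstar - kstar := by
    rw [hSdiff, Finset.card_sdiff_of_subset hPsub, hPcard jstar hj_le, hPcard kstar hk_le]
  have hSsum : ∑ i ∈ S, lam i + ∑ i ∈ P kstar, lam i = ∑ i ∈ P jstar, lam i := by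
    rw [hSdiff]
    exact Finset.sum_sdiff (f := lam) hPsub
  have hD : ((jstar : ℝ) - kstar) * c ≤ ∑ i ∈ S, lam i := by
    have hcard : S.card • c ≤ ∑ i ∈ S, lam i := by
      apply Finset.card_nsmul_le_sum
      intro i hi
      rw [hS, Finset.mem_filter] at hi
      exact hj1 i hi.2.2
    rw [hScard, nsmul_eq_mul, Nat.cast_sub hkj] at hcard
    exact hcard
  have hE : (kstar : ℝ) * c ≤ (kstar : ℝ) * ctil :=
    mul_le_mul_of_nonneg_left hcc (Nat.cast_nonneg _)
  linarith
end
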